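/- arXiv:2107.09089 — 6 statements merged into one kernel-verified Lean document; each statement's English description precedes it below -/
import Mathlib

section
/- Let G be an amenable group and V = W' a dual normed ℝ[G]-module. Then there exists a linear map μ : ℓ∞(G,V) → V such that: (1) μ sends every constant function with value v to v; (2) ‖μ(f)‖ ≤ ‖f‖∞ for all f; (3) μ(g·f) = g·μ(f) for all g ∈ G and f. That is, μ is a norm-non-increasing G-equivariant retraction of the inclusion of V into ℓ∞(G,V) as constant functions. -/
open ENNReal

set_option maxHeartbeats 1000000
set_option synthInstance.maxHeartbeats 400000

variable {G W : Type*}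

/-- The dual action of `g ∈ G` on `V = W'`: `(g · v)(w) = v (g⁻¹ · w)`. -/
noncomputable def dualSmul [Group G] [NormedAddCommGroup W] [NormedSpace ℝ W]
    (ρ : G →* (W ≃ₗᵢ[ℝ] W)) (g : G) (v : W →L[ℝ] ℝ) : W →L[ℝ] ℝ :=
  v.comp (ρ g⁻¹).toContinuousLinearEquiv.toContinuousLinearMap

/-- if `G` is amenable (it admits a left-invariant mean on `ℓ∞(G,ℝ)`) and
`V = W'` is a dual normed `ℝ[G]`-module, then there is a linear, norm-non-increasing,
`G`-equivariant retraction `μ : ℓ∞(G,V) → V` of the inclusion of `V` as constant functions. -/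
theorem amenable_equivariant_mean_on_dual (G : Type*) [Group G]
    (W : Type*) [NormedAddCommGroup W] [NormedSpace ℝ W]
    (ρ : G →* (W ≃ₗᵢ[ℝ] W))
    -- amenability of `G`: a left-invariant mean on `ℓ∞(G,ℝ)`
    (m : lp (fun _ : G => ℝ) ∞ →ₗ[ℝ] ℝ)
    (hconst : ∀ (c : ℝ) (u : lp (fun _ : G => ℝ) ∞), (∀ g : G, u g = c) → m u = c)
    (hpos : ∀ u : lp (fun _ : G => ℝ) ∞, (∀ g : G, 0 ≤ u g) → 0 ≤ m u)
    (hinv : ∀ (g : G) (u u' : lp (fun _ : G => ℝ) ∞),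
      (∀ h : G, u' h = u (g⁻¹ * h)) → m u' = m u) :
    ∃ μ : lp (fun _ : G => (W →L[ℝ] ℝ)) ∞ →ₗ[ℝ] (W →L[ℝ] ℝ),
      (∀ (v : W →L[ℝ] ℝ) (f : lp (fun _ : G => (W →L[ℝ] ℝ)) ∞),
        (∀ g : G, f g = v) → μ f = v) ∧
      (∀ f : lp (fun _ : G => (W →L[ℝ] ℝ)) ∞, ‖μ f‖ ≤ ‖f‖) ∧
      (∀ (g : G) (f f' : lp (fun _ : G => (W →L[ℝ] ℝ)) ∞),
        (∀ h : G, f' h = dualSmul ρ g (f (g⁻¹ * h))) → μ f' = dualSmul ρ g (μ f)) := by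
  classical
  haveI : Fact ((1:ℝ≥0∞) ≤ ∞) := ⟨le_top⟩
  -- constant functions are in lp ∞
  have hmemc : ∀ c : ℝ, Memℓp (fun _ : G => c) ∞ := by
    intro c
    apply memℓp_infty
    refine ⟨‖c‖, ?_⟩
    rintro x ⟨g, rfl⟩
    simp
  -- bound on m
  have hmb : ∀ u : lp (fun _ : G => ℝ) ∞, |m u| ≤ ‖u‖ := by
    intro u
    set k : lp (fun _ : G => ℝ) ∞ := ⟨fun _ => ‖u‖, hmemc ‖u‖⟩ with hk
    have hkc : ∀ g : G, k g = ‖u‖ := fun g => rfl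
    have hmk : m k = ‖u‖ := hconst _ _ hkc
    have h1 : 0 ≤ m (k - u) := by
      apply hpos
      intro g
      have : (k - u) g = ‖u‖ - u g := by
        rw [lp.coeFn_sub]; rfl
      rw [this]
      have := lp.norm_apply_le_norm (by norm_num : (∞ : ℝ≥0∞) ≠ 0) u g
      have h2 : u g ≤ ‖u‖ := le_trans (le_abs_self _) this
      linarith
    have h2 : 0 ≤ m (k + u) := by
      apply hpos
      intro g
      have : (k + u) g = ‖u‖ + u g := by
        rw [lp.coeFn_add]; rfl
      rw [this]
      have := lp.norm_apply_le_norm (by norm_num : (∞ : ℝ≥0∞) ≠ 0) u g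
      have h2 : -(u g) ≤ ‖u‖ := le_trans (neg_le_abs _) this
      linarith
    rw [map_sub] at h1
    rw [map_add] at h2
    rw [abs_le]
    constructor <;> linarith
  -- the evaluation function
  have hmemu : ∀ (f : lp (fun _ : G => (W →L[ℝ] ℝ)) ∞) (w : W),
      Memℓp (fun g : G => f g w) ∞ := by
    intro f w
    apply memℓp_infty
    refine ⟨‖f‖ * ‖w‖, ?_⟩
    rintro x ⟨g, rfl⟩
    calc ‖f g w‖ ≤ ‖f g‖ * ‖w‖ := (f g).le_opNorm w
    _ ≤ ‖f‖ * ‖w‖ := by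
        have := lp.norm_apply_le_norm (by norm_num : (∞ : ℝ≥0∞) ≠ 0) f g
        exact mul_le_mul_of_nonneg_right this (norm_nonneg w)
  set uapp : lp (fun _ : G => (W →L[ℝ] ℝ)) ∞ → W → lp (fun _ : G => ℝ) ∞ :=
    fun f w => ⟨fun g => f g w, hmemu f w⟩ with huapp
  have huapp_apply : ∀ f w (g : G), uapp f w g = f g w := fun f w g => rfl
  -- μ as a function of f
  have hbnd : ∀ f w, ‖m (uapp f w)‖ ≤ ‖f‖ * ‖w‖ := by
    intro f w
    refine le_trans (hmb _) ?_
    apply lp.norm_le_of_forall_le (by positivity)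
    intro g
    rw [huapp_apply]
    calc ‖f g w‖ ≤ ‖f g‖ * ‖w‖ := (f g).le_opNorm w
    _ ≤ ‖f‖ * ‖w‖ := mul_le_mul_of_nonneg_right
        (lp.norm_apply_le_norm (by norm_num : (∞ : ℝ≥0∞) ≠ 0) f g) (norm_nonneg w)
  have hueq : ∀ (f : lp (fun _ : G => (W →L[ℝ] ℝ)) ∞) w₁ w₂ (a b : ℝ),
      uapp f (a • w₁ + b • w₂) = a • uapp f w₁ + b • uapp f w₂ := by
    intro f w₁ w₂ a b
    apply lp.ext
    funext g
    have : (a • uapp f w₁ + b • uapp f w₂) g = a • (uapp f w₁ g) + b • (uapp f w₂ g) := by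
      rw [lp.coeFn_add]; rfl
    rw [this, huapp_apply, huapp_apply, huapp_apply]
    simp
  set μ0 : lp (fun _ : G => (W →L[ℝ] ℝ)) ∞ → (W →L[ℝ] ℝ) := fun f =>
    LinearMap.mkContinuous
      { toFun := fun w => m (uapp f w)
        map_add' := by
          intro w₁ w₂
          have := hueq f w₁ w₂ 1 1
          simp only [one_smul] at this
          show m (uapp f (w₁ + w₂)) = m (uapp f w₁) + m (uapp f w₂)
          rw [this, map_add]
        map_smul' := by
          intro a w
          have := hueq f w 0 a 0
          simp only [zero_smul, smul_zero, add_zero] at this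
          show m (uapp f (a • w)) = a • m (uapp f w)
          rw [this, map_smul] }
      ‖f‖ (fun w => hbnd f w) with hμ0
  have hμ0_apply : ∀ f w, μ0 f w = m (uapp f w) := fun f w => rfl
  have hadd : ∀ (f₁ f₂ : lp (fun _ : G => (W →L[ℝ] ℝ)) ∞) (a b : ℝ) w,
      uapp (a • f₁ + b • f₂) w = a • uapp f₁ w + b • uapp f₂ w := by
    intro f₁ f₂ a b w
    apply lp.ext
    funext g
    have h1 : (a • uapp f₁ w + b • uapp f₂ w) g
        = a • (uapp f₁ w g) + b • (uapp f₂ w g) := by rw [lp.coeFn_add]; rfl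
    have h2 : (a • f₁ + b • f₂) g = a • (f₁ g) + b • (f₂ g) := by rw [lp.coeFn_add]; rfl
    rw [h1, huapp_apply, huapp_apply, huapp_apply, h2]
    simp
  refine ⟨{ toFun := μ0
            map_add' := by
              intro f₁ f₂
              ext w
              have := hadd f₁ f₂ 1 1 w
              simp only [one_smul] at this
              simp only [ContinuousLinearMap.add_apply, hμ0_apply, this, map_add]
            map_smul' := by
              intro a f
              ext w
              have := hadd f 0 a 0 w
              simp only [zero_smul, smul_zero, add_zero] at this
              simp only [ContinuousLinearMap.coe_smul', Pi.smul_apply, hμ0_apply, this,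
                map_smul, RingHom.id_apply, smul_eq_mul] }, ?_, ?_, ?_⟩
  · intro v f hf
    ext w
    simp only [LinearMap.coe_mk, AddHom.coe_mk, hμ0_apply]
    exact hconst (v w) _ (fun g => by rw [huapp_apply, hf g])
  · intro f
    exact LinearMap.mkContinuous_norm_le _ (norm_nonneg f) (hbnd f)
  · intro g f f' hf
    ext w
    simp only [LinearMap.coe_mk, AddHom.coe_mk, hμ0_apply]
    have hds : dualSmul ρ g (μ0 f) w = μ0 f ((ρ g⁻¹) w) := rfl
    rw [hds, hμ0_apply]
    apply hinv g
    intro h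
    rw [huapp_apply, huapp_apply, hf h]
    rfl
end

section
/- Let G be a group and V = (ℓ∞(G,ℝ)/ℝ)'. Suppose β : G → V is a G-equivariant function whose homogeneous coboundary equals the Johnson cocycle J(g₀,g₁)[f] = f(g₀) − f(g₁). Then the linear functional m : ℓ∞(G,ℝ) → ℝ defined by m(f) = f(1) − β(1)[f] satisfies: m(const c) = c for all c ∈ ℝ, m is continuous, and m(g·f) = m(f) for all g ∈ G and f ∈ ℓ∞(G,ℝ). -/
open ENNReal

/-- if `β : G → V = (ℓ∞(G,ℝ)/ℝ)'` is a `G`-equivariant cochain whose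
homogeneous coboundary is the Johnson cocycle, then `m(f) = f 1 - β 1 [f]` is a
continuous linear unital left-invariant functional on `ℓ∞(G,ℝ)`. -/
theorem invariant_functional_of_equivariant_primitive (G : Type*) [Group G]
    (β : G → (lp (fun _ : G => ℝ) ∞ →L[ℝ] ℝ))
    -- each `β g` vanishes on constants, i.e. is a functional on `ℓ∞(G,ℝ)/ℝ`
    (hβconst : ∀ (g : G) (c : ℝ) (f : lp (fun _ : G => ℝ) ∞),
      (∀ h : G, f h = c) → β g f = 0)
    -- `G`-equivariance: `β (g h) = g · β h`, where `(g·v)[f] = v[g⁻¹·f]`, `(g⁻¹·f)(k) = f (g k)`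
    (hβequiv : ∀ (g h : G) (f f' : lp (fun _ : G => ℝ) ∞),
      (∀ k : G, f' k = f (g * k)) → β (g * h) f = β h f')
    -- the coboundary of `β` is the Johnson cocycle
    (hβcob : ∀ (g₀ g₁ : G) (f : lp (fun _ : G => ℝ) ∞),
      β g₀ f - β g₁ f = f g₀ - f g₁) :
    ∃ m : lp (fun _ : G => ℝ) ∞ →L[ℝ] ℝ,
      (∀ f : lp (fun _ : G => ℝ) ∞, m f = f 1 - β 1 f) ∧
      (∀ (c : ℝ) (f : lp (fun _ : G => ℝ) ∞), (∀ h : G, f h = c) → m f = c) ∧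
      (∀ (g : G) (f f' : lp (fun _ : G => ℝ) ∞),
        (∀ h : G, f' h = f (g⁻¹ * h)) → m f' = m f) := by
  -- evaluation at 1 as a continuous linear map
  let Eₗ : lp (fun _ : G => ℝ) ∞ →ₗ[ℝ] ℝ :=
    { toFun := fun f => f 1
      map_add' := fun f g => by simp [lp.coeFn_add]
      map_smul' := fun c f => by simp [lp.coeFn_smul] }
  let E : lp (fun _ : G => ℝ) ∞ →L[ℝ] ℝ :=
    LinearMap.mkContinuous Eₗ 1 (fun f => by
      rw [one_mul]; exact lp.norm_apply_le_norm ENNReal.top_ne_zero f 1)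
  refine ⟨E - β 1, fun f => rfl, ?_, ?_⟩
  · intro c f hf
    have : (E - β 1) f = f 1 - β 1 f := rfl
    rw [this, hβconst 1 c f hf, hf 1, sub_zero]
  · intro g f f' hf'
    have h1 : β 1 f = β g f' := by
      have := hβequiv g⁻¹ g f f' hf'
      simpa using this
    have h2 : β 1 f' - β g f' = f' 1 - f' g := hβcob 1 g f'
    have e1 : f' 1 = f (g⁻¹ : G) := by simpa using hf' 1
    have e2 : f' g = f 1 := by simpa using hf' g
    have h3 : (E - β 1) f' = f' 1 - β 1 f' := rfl
    have h4 : (E - β 1) f = f 1 - β 1 f := rfl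
    rw [h3, h4]
    have : β 1 f' = β 1 f + f (g⁻¹ : G) - f 1 := by
      rw [e1, e2] at h2; linarith [h1, h2]
    rw [this, e1]; ring
end

section
/- A group G is amenable if and only if it admits a continuous linear functional m : ℓ∞(G,ℝ) → ℝ such that m(const c) = c for every c ∈ ℝ and m(g·f) = m(f) for all g ∈ G and f ∈ ℓ∞(G,ℝ). (Positivity of m is not required: any such invariant continuous unital functional implies the existence of a genuine left-invariant mean.) -/
open ENNReal

set_option linter.unusedSectionVars false
set_option linter.unreachableTactic false
set_option linter.unusedTactic false
set_option maxHeartbeats 1000000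
set_option synthInstance.maxHeartbeats 1000000

noncomputable section

namespace AmenAux

variable {G : Type*} [Group G]

abbrev EG (G : Type*) [Group G] := lp (fun _ : G => ℝ) ∞

lemma memE {f : G → ℝ} {C : ℝ} (h : ∀ g, |f g| ≤ C) : Memℓp f ∞ :=
  memℓp_infty ⟨C, by rintro x ⟨g, rfl⟩; simpa [Real.norm_eq_abs] using h g⟩

noncomputable def elt (f : G → ℝ) {C : ℝ} (h : ∀ g, |f g| ≤ C) : EG G :=
  ⟨f, memE h⟩

@[simp] lemma elt_apply (f : G → ℝ) {C : ℝ} (h : ∀ g, |f g| ≤ C) (x : G) :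
    elt f h x = f x := rfl

lemma apply_le_norm (f : EG G) (x : G) : |f x| ≤ ‖f‖ := by
  simpa [Real.norm_eq_abs] using lp.norm_apply_le_norm ENNReal.top_ne_zero f x

lemma norm_le {f : EG G} {C : ℝ} (hC : 0 ≤ C) (h : ∀ x, |f x| ≤ C) : ‖f‖ ≤ C :=
  lp.norm_le_of_forall_le hC (by simpa [Real.norm_eq_abs] using h)

/-- the constant function as an element of `ℓ∞`. -/
noncomputable def const (c : ℝ) : EG G := elt (fun _ => c) (C := |c|) (fun _ => le_rfl)

@[simp] lemma const_apply (c : ℝ) (x : G) : (const c : EG G) x = c := rfl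

/-- positive part -/
noncomputable def posPart (f : EG G) : EG G :=
  elt (fun x => max (f x) 0) (C := ‖f‖) (fun x => by
    have h1 := apply_le_norm f x
    rw [abs_of_nonneg (le_max_right _ _)]
    exact max_le ((le_abs_self _).trans h1) ((abs_nonneg _).trans h1))

@[simp] lemma posPart_apply (f : EG G) (x : G) : posPart f x = max (f x) 0 := rfl

/-- negative part -/
noncomputable def negPart (f : EG G) : EG G := posPart (-f)

@[simp] lemma negPart_apply (f : EG G) (x : G) : negPart f x = max (-(f x)) 0 := by
  simp only [negPart, posPart_apply, lp.coeFn_neg, Pi.neg_apply]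

lemma posPart_nonneg (f : EG G) (x : G) : 0 ≤ posPart f x := le_max_right _ _
lemma negPart_nonneg (f : EG G) (x : G) : 0 ≤ negPart f x := le_max_right _ _

section P

variable (m : EG G →L[ℝ] ℝ)

/-- the set of values of `m` on `[0, f]`. -/
def S (f : EG G) : Set ℝ := {r | ∃ h : EG G, (∀ x, 0 ≤ h x ∧ h x ≤ f x) ∧ m h = r}

noncomputable def P (f : EG G) : ℝ := sSup (S m f)

lemma zero_mem_S {f : EG G} (hf : ∀ x, 0 ≤ f x) : (0 : ℝ) ∈ S m f :=
  ⟨0, fun x => by simp only [lp.coeFn_zero, Pi.zero_apply]; exact ⟨le_rfl, hf x⟩, map_zero m⟩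

lemma S_bddAbove (f : EG G) : BddAbove (S m f) := by
  refine ⟨‖m‖ * ‖f‖, ?_⟩
  rintro r ⟨h, hh, rfl⟩
  have hnorm : ‖h‖ ≤ ‖f‖ := by
    refine norm_le (norm_nonneg f) fun x => ?_
    rw [abs_of_nonneg (hh x).1]
    exact (hh x).2.trans ((le_abs_self _).trans (apply_le_norm f x))
  calc m h ≤ |m h| := le_abs_self _
    _ ≤ ‖m‖ * ‖h‖ := m.le_opNorm h
    _ ≤ ‖m‖ * ‖f‖ := mul_le_mul_of_nonneg_left hnorm (norm_nonneg m)

lemma le_P {f : EG G} {r : ℝ} (hr : r ∈ S m f) : r ≤ P m f := le_csSup (S_bddAbove m f) hr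

lemma P_nonneg {f : EG G} (hf : ∀ x, 0 ≤ f x) : 0 ≤ P m f := le_P m (zero_mem_S m hf)

lemma P_le {f : EG G} (hf : ∀ x, 0 ≤ f x) {a : ℝ} (h : ∀ r ∈ S m f, r ≤ a) : P m f ≤ a :=
  csSup_le ⟨0, zero_mem_S m hf⟩ h

lemma P_eq_zero {f : EG G} (hf : ∀ x, f x = 0) : P m f = 0 := by
  refine le_antisymm (P_le m (fun x => (hf x).ge) ?_) (P_nonneg m fun x => (hf x).ge)
  rintro r ⟨h, hh, rfl⟩
  have : h = 0 := by
    apply lp.ext; funext x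
    have := hh x
    rw [hf x] at this
    simpa [lp.coeFn_zero] using le_antisymm this.2 this.1
  rw [this, map_zero]

lemma P_add {f g : EG G} (hf : ∀ x, 0 ≤ f x) (hg : ∀ x, 0 ≤ g x) :
    P m (f + g) = P m f + P m g := by
  have hfg : ∀ x, 0 ≤ (f + g) x := fun x => by
    rw [lp.coeFn_add, Pi.add_apply]; exact add_nonneg (hf x) (hg x)
  apply le_antisymm
  · refine P_le m hfg ?_
    rintro r ⟨h, hh, rfl⟩
    have hbd : ∀ x, |min (h x) (f x)| ≤ ‖h‖ := fun x => by
      rw [abs_of_nonneg (le_min (hh x).1 (hf x))]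
      exact (min_le_left _ _).trans ((le_abs_self _).trans (apply_le_norm h x))
    set h1 : EG G := elt (fun x => min (h x) (f x)) hbd with hh1
    have hmem1 : ∀ x, 0 ≤ h1 x ∧ h1 x ≤ f x := fun x =>
      ⟨le_min (hh x).1 (hf x), min_le_right _ _⟩
    have hmem2 : ∀ x, 0 ≤ (h - h1) x ∧ (h - h1) x ≤ g x := by
      intro x
      rw [lp.coeFn_sub, Pi.sub_apply]
      have hsum : h x ≤ f x + g x := by
        have := (hh x).2; rwa [lp.coeFn_add, Pi.add_apply] at this
      have h1x : h1 x = min (h x) (f x) := rfl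
      rw [h1x]
      rcases min_cases (h x) (f x) with ⟨heq, _⟩ | ⟨heq, _⟩ <;> rw [heq] <;>
        constructor <;> first | linarith [hg x] | linarith
    have hsplit : h = h1 + (h - h1) := by
      apply lp.ext; funext x
      simp only [lp.coeFn_add, Pi.add_apply, lp.coeFn_sub, Pi.sub_apply]
      ring
    calc m h = m h1 + m (h - h1) := by rw [hsplit, map_add]; simp [← hsplit]
      _ ≤ P m f + P m g := add_le_add (le_P m ⟨h1, hmem1, rfl⟩) (le_P m ⟨h - h1, hmem2, rfl⟩)
  · have key : ∀ r1 ∈ S m f, ∀ r2 ∈ S m g, r1 + r2 ≤ P m (f + g) := by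
      rintro r1 ⟨h1, hh1, rfl⟩ r2 ⟨h2, hh2, rfl⟩
      refine (map_add m h1 h2).symm.trans_le (le_P m ⟨h1 + h2, fun x => ?_, rfl⟩)
      rw [lp.coeFn_add, Pi.add_apply, lp.coeFn_add, Pi.add_apply]
      exact ⟨add_nonneg (hh1 x).1 (hh2 x).1, add_le_add (hh1 x).2 (hh2 x).2⟩
    have step : P m g ≤ P m (f + g) - P m f := by
      refine csSup_le ⟨0, zero_mem_S m hg⟩ fun r2 hr2 => ?_
      have : P m f ≤ P m (f + g) - r2 :=
        csSup_le ⟨0, zero_mem_S m hf⟩ fun r1 hr1 => by linarith [key r1 hr1 r2 hr2]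
      linarith
    linarith

lemma P_smul_le {c : ℝ} (hc : 0 < c) {f : EG G} (hf : ∀ x, 0 ≤ f x) :
    P m (c • f) ≤ c * P m f := by
  have hcf : ∀ x, 0 ≤ (c • f) x := fun x => by
    rw [lp.coeFn_smul, Pi.smul_apply, smul_eq_mul]; exact mul_nonneg hc.le (hf x)
  refine P_le m hcf ?_
  rintro r ⟨h, hh, rfl⟩
  have hmem : ∀ x, 0 ≤ (c⁻¹ • h) x ∧ (c⁻¹ • h) x ≤ f x := by
    intro x
    rw [lp.coeFn_smul, Pi.smul_apply, smul_eq_mul]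
    have h2 := (hh x).2
    rw [lp.coeFn_smul, Pi.smul_apply, smul_eq_mul] at h2
    constructor
    · exact mul_nonneg (inv_nonneg.mpr hc.le) (hh x).1
    · have := mul_le_mul_of_nonneg_left h2 (inv_nonneg.mpr hc.le)
      rwa [inv_mul_cancel_left₀ hc.ne'] at this
  have : m h = c * m (c⁻¹ • h) := by
    rw [map_smul, smul_eq_mul, ← mul_assoc, mul_inv_cancel₀ hc.ne', one_mul]
  rw [this]
  exact mul_le_mul_of_nonneg_left (le_P m ⟨c⁻¹ • h, hmem, rfl⟩) hc.le

lemma P_smul {c : ℝ} (hc : 0 ≤ c) {f : EG G} (hf : ∀ x, 0 ≤ f x) :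
    P m (c • f) = c * P m f := by
  rcases hc.eq_or_lt with rfl | hc
  · rw [zero_mul]
    exact P_eq_zero m fun x => by rw [lp.coeFn_smul, Pi.smul_apply, smul_eq_mul, zero_mul]
  · refine le_antisymm (P_smul_le m hc hf) ?_
    have hcf : ∀ x, 0 ≤ (c • f) x := fun x => by
      rw [lp.coeFn_smul, Pi.smul_apply, smul_eq_mul]; exact mul_nonneg hc.le (hf x)
    have h2 := P_smul_le m (inv_pos.mpr hc) hcf
    rw [inv_smul_smul₀ hc.ne'] at h2
    calc c * P m f ≤ c * (c⁻¹ * P m (c • f)) := mul_le_mul_of_nonneg_left h2 hc.le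
      _ = P m (c • f) := by field_simp

lemma P_invariant (hinv : ∀ (g : G) (f f' : EG G), (∀ h : G, f' h = f (g⁻¹ * h)) → m f' = m f)
    (g : G) {f f' : EG G} (hrel : ∀ x, f' x = f (g⁻¹ * x)) : P m f' = P m f := by
  have incl1 : S m f' ⊆ S m f := by
    rintro r ⟨h', hh', rfl⟩
    have hbd : ∀ x, |h' (g * x)| ≤ ‖h'‖ := fun x => apply_le_norm h' _
    set h : EG G := elt (fun x => h' (g * x)) hbd with hhdef
    have hrel2 : ∀ x, h' x = h (g⁻¹ * x) := fun x => by
      simp [hhdef, mul_inv_cancel_left]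
    refine ⟨h, fun x => ?_, (hinv g h h' hrel2).symm⟩
    constructor
    · exact (hh' (g * x)).1
    · have := (hh' (g * x)).2
      rwa [hrel (g * x), inv_mul_cancel_left] at this
  have incl2 : S m f ⊆ S m f' := by
    rintro r ⟨h, hh, rfl⟩
    have hbd : ∀ x, |h (g⁻¹ * x)| ≤ ‖h‖ := fun x => apply_le_norm h _
    set h' : EG G := elt (fun x => h (g⁻¹ * x)) hbd with hhdef
    have hrel2 : ∀ x, h' x = h (g⁻¹ * x) := fun x => rfl
    refine ⟨h', fun x => ?_, hinv g h h' hrel2⟩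
    exact ⟨(hh (g⁻¹ * x)).1, by rw [hrel2 x, hrel x]; exact (hh (g⁻¹ * x)).2⟩
  rw [P, P, subset_antisymm incl1 incl2]

/-- the positive-part functional, defined on all of ℓ∞. -/
noncomputable def Mfun (f : EG G) : ℝ := P m (posPart f) - P m (negPart f)

lemma Mfun_diff {a b f : EG G} (ha : ∀ x, 0 ≤ a x) (hb : ∀ x, 0 ≤ b x)
    (hf : ∀ x, f x = a x - b x) : Mfun m f = P m a - P m b := by
  have key : posPart f + b = negPart f + a := by
    apply lp.ext; funext x
    simp only [lp.coeFn_add, Pi.add_apply, posPart_apply, negPart_apply, hf x]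
    rcases le_total (a x) (b x) with h | h
    · rw [max_eq_right (by linarith), max_eq_left (by linarith)]; ring
    · rw [max_eq_left (by linarith), max_eq_right (by linarith)]; ring
  have h1 := P_add m (posPart_nonneg (G := G) f) hb
  have h2 := P_add m (negPart_nonneg (G := G) f) ha
  rw [key] at h1
  rw [Mfun]
  linarith

lemma Mfun_add (f g : EG G) : Mfun m (f + g) = Mfun m f + Mfun m g := by
  have h1 : ∀ x, (f + g) x = (posPart f + posPart g) x - (negPart f + negPart g) x := by
    intro x
    simp only [lp.coeFn_add, Pi.add_apply, posPart_apply, negPart_apply]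
    have e1 : max (f x) 0 - max (-f x) 0 = f x := max_zero_sub_max_neg_zero_eq_self _
    have e2 : max (g x) 0 - max (-g x) 0 = g x := max_zero_sub_max_neg_zero_eq_self _
    linarith
  have ha : ∀ x, 0 ≤ (posPart f + posPart g) x := fun x => by
    rw [lp.coeFn_add, Pi.add_apply]
    exact add_nonneg (posPart_nonneg f x) (posPart_nonneg g x)
  have hb : ∀ x, 0 ≤ (negPart f + negPart g) x := fun x => by
    rw [lp.coeFn_add, Pi.add_apply]
    exact add_nonneg (negPart_nonneg f x) (negPart_nonneg g x)
  rw [Mfun_diff m ha hb h1, P_add m (posPart_nonneg f) (posPart_nonneg g),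
    P_add m (negPart_nonneg f) (negPart_nonneg g), Mfun, Mfun]
  ring

lemma Mfun_smul (c : ℝ) (f : EG G) : Mfun m (c • f) = c * Mfun m f := by
  rcases le_or_gt 0 c with hc | hc
  · have h1 : ∀ x, (c • f) x = (c • posPart f) x - (c • negPart f) x := by
      intro x
      simp only [lp.coeFn_smul, Pi.smul_apply, smul_eq_mul, posPart_apply, negPart_apply]
      have := max_zero_sub_max_neg_zero_eq_self (f x)
      nlinarith [max_zero_sub_max_neg_zero_eq_self (f x)]
    have ha : ∀ x, 0 ≤ (c • posPart f) x := fun x => by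
      rw [lp.coeFn_smul, Pi.smul_apply, smul_eq_mul]
      exact mul_nonneg hc (posPart_nonneg f x)
    have hb : ∀ x, 0 ≤ (c • negPart f) x := fun x => by
      rw [lp.coeFn_smul, Pi.smul_apply, smul_eq_mul]
      exact mul_nonneg hc (negPart_nonneg f x)
    rw [Mfun_diff m ha hb h1, P_smul m hc (posPart_nonneg f), P_smul m hc (negPart_nonneg f),
      Mfun]
    ring
  · have h1 : ∀ x, (c • f) x = ((-c) • negPart f) x - ((-c) • posPart f) x := by
      intro x
      simp only [lp.coeFn_smul, Pi.smul_apply, smul_eq_mul, posPart_apply, negPart_apply]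
      nlinarith [max_zero_sub_max_neg_zero_eq_self (f x)]
    have ha : ∀ x, 0 ≤ ((-c) • negPart f) x := fun x => by
      rw [lp.coeFn_smul, Pi.smul_apply, smul_eq_mul]
      exact mul_nonneg (by linarith) (negPart_nonneg f x)
    have hb : ∀ x, 0 ≤ ((-c) • posPart f) x := fun x => by
      rw [lp.coeFn_smul, Pi.smul_apply, smul_eq_mul]
      exact mul_nonneg (by linarith) (posPart_nonneg f x)
    rw [Mfun_diff m ha hb h1, P_smul m (by linarith) (negPart_nonneg f),
      P_smul m (by linarith) (posPart_nonneg f), Mfun]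
    ring

lemma Mfun_of_nonneg {f : EG G} (hf : ∀ x, 0 ≤ f x) : Mfun m f = P m f := by
  have h1 : ∀ x, f x = f x - (0 : EG G) x := fun x => by
    simp [lp.coeFn_zero]
  rw [Mfun_diff m (a := f) (b := 0) hf (fun x => by simp [lp.coeFn_zero]) h1,
    P_eq_zero m (f := (0 : EG G)) (fun x => by simp [lp.coeFn_zero]), sub_zero]

lemma Mfun_invariant (hinv : ∀ (g : G) (f f' : EG G), (∀ h : G, f' h = f (g⁻¹ * h)) → m f' = m f)
    (g : G) {f f' : EG G} (hrel : ∀ x, f' x = f (g⁻¹ * x)) : Mfun m f' = Mfun m f := by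
  have hp : ∀ x, posPart f' x = posPart f (g⁻¹ * x) := fun x => by
    simp [hrel x]
  have hn : ∀ x, negPart f' x = negPart f (g⁻¹ * x) := fun x => by
    simp [hrel x]
  rw [Mfun, Mfun, P_invariant m hinv g hp, P_invariant m hinv g hn]

end P

end AmenAux

open AmenAux in
/-- a group `G` is amenable (admits a left-invariant mean on `ℓ∞(G,ℝ)`)
if and only if it admits a continuous linear functional `m` on `ℓ∞(G,ℝ)` which is unital
(`m(const c) = c`) and left-invariant; positivity is not required. -/
theorem amenable_iff_invariant_continuous_unital_functional (G : Type*) [Group G] :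
    (∃ m : lp (fun _ : G => ℝ) ∞ →ₗ[ℝ] ℝ,
      (∀ (c : ℝ) (f : lp (fun _ : G => ℝ) ∞), (∀ g : G, f g = c) → m f = c) ∧
      (∀ f : lp (fun _ : G => ℝ) ∞, (∀ g : G, 0 ≤ f g) → 0 ≤ m f) ∧
      (∀ (g : G) (f f' : lp (fun _ : G => ℝ) ∞),
        (∀ h : G, f' h = f (g⁻¹ * h)) → m f' = m f)) ↔
    (∃ m : lp (fun _ : G => ℝ) ∞ →L[ℝ] ℝ,
      (∀ (c : ℝ) (f : lp (fun _ : G => ℝ) ∞), (∀ g : G, f g = c) → m f = c) ∧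
      (∀ (g : G) (f f' : lp (fun _ : G => ℝ) ∞),
        (∀ h : G, f' h = f (g⁻¹ * h)) → m f' = m f)) := by
  constructor
  · rintro ⟨m, hmc, hmpos, hminv⟩
    have hbound : ∀ f : lp (fun _ : G => ℝ) ∞, ‖m f‖ ≤ 1 * ‖f‖ := by
      intro f
      have hconst : m (const ‖f‖) = ‖f‖ := hmc ‖f‖ (const ‖f‖) (fun _ => rfl)
      have h1 : 0 ≤ m (const ‖f‖ - f) := by
        refine hmpos _ fun x => ?_
        rw [lp.coeFn_sub, Pi.sub_apply, const_apply, sub_nonneg]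
        exact (le_abs_self _).trans (apply_le_norm f x)
      have h2 : 0 ≤ m (const ‖f‖ + f) := by
        refine hmpos _ fun x => ?_
        rw [lp.coeFn_add, Pi.add_apply, const_apply]
        have := (neg_abs_le (f x)).trans' (neg_le_neg (apply_le_norm f x))
        linarith [apply_le_norm f x, neg_abs_le (f x)]
      rw [map_sub, hconst] at h1
      rw [map_add, hconst] at h2
      rw [Real.norm_eq_abs, abs_le, one_mul]
      constructor <;> linarith
    refine ⟨LinearMap.mkContinuous m 1 hbound, ?_, ?_⟩
    · intro c f hf
      exact hmc c f hf
    · intro g f f' hrel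
      exact hminv g f f' hrel
  · rintro ⟨m, hmc, hminv⟩
    set Q : ℝ := P m (const 1) with hQ
    have hQ1 : 1 ≤ Q := by
      refine le_P m ⟨const 1, fun x => ⟨by norm_num, le_rfl⟩, ?_⟩
      exact hmc 1 (const 1) (fun _ => rfl)
    have hQpos : 0 < Q := lt_of_lt_of_le one_pos hQ1
    have hMconst : ∀ (c : ℝ) (f : lp (fun _ : G => ℝ) ∞), (∀ g : G, f g = c) →
        Mfun m f = c * Q := by
      intro c f hf
      have hfc : f = c • const 1 := by
        apply lp.ext; funext x
        rw [hf x, lp.coeFn_smul, Pi.smul_apply, smul_eq_mul, const_apply, mul_one]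
      rw [hfc, Mfun_smul, Mfun_of_nonneg m (fun x => by norm_num), hQ]
    refine ⟨{
      toFun := fun f => Q⁻¹ * Mfun m f
      map_add' := fun f g => by
        show Q⁻¹ * Mfun m (f + g) = Q⁻¹ * Mfun m f + Q⁻¹ * Mfun m g
        rw [Mfun_add]; ring
      map_smul' := fun c f => by
        show Q⁻¹ * Mfun m (c • f) = (RingHom.id ℝ) c • (Q⁻¹ * Mfun m f)
        rw [Mfun_smul]; simp only [RingHom.id_apply, smul_eq_mul]; ring }, ?_, ?_, ?_⟩
    · intro c f hf
      simp only [LinearMap.coe_mk, AddHom.coe_mk]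
      rw [hMconst c f hf]
      field_simp
    · intro f hf
      simp only [LinearMap.coe_mk, AddHom.coe_mk]
      rw [Mfun_of_nonneg m hf]
      exact mul_nonneg (inv_nonneg.mpr hQpos.le) (P_nonneg m hf)
    · intro g f f' hrel
      simp only [LinearMap.coe_mk, AddHom.coe_mk]
      rw [Mfun_invariant m hminv g hrel]
end
end

section
/- Let W ⊆ ℝⁿ be a convex open set containing 0, and let ω be a smooth closed k-form on W (k ≥ 1) satisfying: for some L ≥ 0, |ω(q)(v₁,…,v_k)| ≤ L‖v₁‖⋯‖v_k‖ for all q ∈ W and vectors v_i. Then the standard cone-operator primitive μ, defined by μ(q)(v₁,…,v_{k−1}) = ∫₀¹ ω(tq)(q, tv₁, …, tv_{k−1}) dt, satisfies dμ = ω and the bound |μ(q)(v₁,…,v_{k−1})| ≤ (L·‖q‖/k)·‖v₁‖⋯‖v_{k−1}‖ for all q ∈ W. -/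
open scoped BigOperators
open Metric Set MeasureTheory
open Metric Set MeasureTheory

abbrev Esp (n : ℕ) := EuclideanSpace ℝ (Fin n)
abbrev Om (n m : ℕ) := ContinuousMultilinearMap ℝ (fun _ : Fin (m + 1) => Esp n) ℝ

variable {n m : ℕ} {W : Set (Esp n)} {ω : Esp n → Om n m}

noncomputable def Fder (ω : Esp n → Om n m) (w : Fin m → Esp n) (x : Esp n) (t : ℝ) :
    Esp n →L[ℝ] ℝ :=
  (((ContinuousLinearMap.id ℝ (Om n m)).flipMultilinear
      (Fin.cons x fun j => t • w j)).comp
      ((fderiv ℝ ω (t • x)).comp (t • ContinuousLinearMap.id ℝ (Esp n))))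
    + ∑ i : Fin (m+1), ((ω (t • x)).toContinuousLinearMap
        (Fin.cons x fun j => t • w j) i).comp
        ((Fin.cons (ContinuousLinearMap.id ℝ (Esp n)) (fun _ => 0) :
          Fin (m+1) → Esp n →L[ℝ] Esp n) i)

section prelude1
lemma aux_prod_norm_cons (x : Esp n) (c : Fin m → Esp n) :
    ∏ i, ‖(Fin.cons x c : Fin (m+1) → Esp n) i‖ = ‖x‖ * ∏ j, ‖c j‖ := by
  have h : (fun i => ‖(Fin.cons x c : Fin (m+1) → Esp n) i‖)
      = Fin.cons ‖x‖ fun j => ‖c j‖ := by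
    funext i
    refine Fin.cases ?_ (fun j => ?_) i <;> simp
  calc ∏ i, ‖(Fin.cons x c : Fin (m+1) → Esp n) i‖
      = ∏ i, (Fin.cons ‖x‖ (fun j => ‖c j‖) : Fin (m+1) → ℝ) i := by rw [h]
  _ = ‖x‖ * ∏ j, ‖c j‖ := by rw [Fin.prod_cons]

lemma aux_hasFDerivAt_omega (hWopen : IsOpen W) (hsmooth : ContDiffOn ℝ (⊤ : ℕ∞) ω W)
    {p : Esp n} (hp : p ∈ W) : HasFDerivAt ω (fderiv ℝ ω p) p :=
  (((hsmooth.differentiableOn (by simp)) p hp).differentiableAt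
    (hWopen.mem_nhds hp)).hasFDerivAt

lemma aux_contOn_fderiv (hWopen : IsOpen W) (hsmooth : ContDiffOn ℝ (⊤ : ℕ∞) ω W) :
    ContinuousOn (fun p => fderiv ℝ ω p) W := by
  have h := ((hsmooth.fderivWithin hWopen.uniqueDiffOn
    (by exact_mod_cast le_top : (0:WithTop ℕ∞) + 1 ≤ ((⊤ : ℕ∞) : WithTop ℕ∞))).continuousOn : ContinuousOn (fderivWithin ℝ ω W) W)
  exact h.congr fun p hp => (fderivWithin_of_isOpen hWopen hp).symm

lemma aux_norm_omega_le {L : ℝ} (hL : 0 ≤ L)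
    (hbound : ∀ q ∈ W, ∀ v : Fin (m + 1) → Esp n, |ω q v| ≤ L * ∏ i, ‖v i‖)
    {p : Esp n} (hp : p ∈ W) : ‖ω p‖ ≤ L :=
  (ω p).opNorm_le_bound hL fun v => by
    rw [Real.norm_eq_abs]; exact hbound p hp v

lemma aux_cont_eval (hWconv : Convex ℝ W) (hW0 : (0 : Esp n) ∈ W)
    (hsmooth : ContDiffOn ℝ (⊤ : ℕ∞) ω W)
    {x : Esp n} (hx : x ∈ W) {g : ℝ → Fin (m+1) → Esp n} (hg : Continuous g) :
    ContinuousOn (fun t => ω (t • x) (g t)) (Icc (0:ℝ) 1) := by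
  have hmaps : ∀ t ∈ Icc (0:ℝ) 1, t • x ∈ W := fun t ht =>
    hWconv.smul_mem_of_zero_mem hW0 hx ht
  have h1 : ContinuousOn (fun t : ℝ => ω (t • x)) (Icc 0 1) :=
    (hsmooth.continuousOn).comp ((continuous_id.smul continuous_const).continuousOn) hmaps
  exact continuous_eval.comp_continuousOn (h1.prodMk hg.continuousOn)

lemma aux_cont_eval_deriv (hWconv : Convex ℝ W) (hW0 : (0 : Esp n) ∈ W)
    (hWopen : IsOpen W) (hsmooth : ContDiffOn ℝ (⊤ : ℕ∞) ω W)
    {x : Esp n} (hx : x ∈ W) (u : Esp n) {g : ℝ → Fin (m+1) → Esp n} (hg : Continuous g) :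
    ContinuousOn (fun t => fderiv ℝ ω (t • x) u (g t)) (Icc (0:ℝ) 1) := by
  have hmaps : ∀ t ∈ Icc (0:ℝ) 1, t • x ∈ W := fun t ht =>
    hWconv.smul_mem_of_zero_mem hW0 hx ht
  have h1 : ContinuousOn (fun t : ℝ => fderiv ℝ ω (t • x)) (Icc 0 1) :=
    (aux_contOn_fderiv hWopen hsmooth).comp
      ((continuous_id.smul continuous_const).continuousOn) hmaps
  have h2 : ContinuousOn (fun t : ℝ => fderiv ℝ ω (t • x) u) (Icc 0 1) :=
    (ContinuousLinearMap.apply ℝ (Om n m) u).continuous.comp_continuousOn h1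
  exact continuous_eval.comp_continuousOn (h2.prodMk hg.continuousOn)

lemma aux_cont_consarg (x : Esp n) (w : Fin m → Esp n) :
    Continuous (fun t : ℝ => (Fin.cons x fun j => t • w j : Fin (m+1) → Esp n)) := by
  refine continuous_pi fun i => ?_
  refine Fin.cases ?_ (fun j => ?_) i
  · simpa using continuous_const
  · show Continuous fun t : ℝ => t • w j
    exact continuous_id.smul continuous_const

lemma Fder_apply (ω : Esp n → Om n m) (w : Fin m → Esp n) (x : Esp n) (t : ℝ) (u : Esp n) :
    Fder ω w x t u = t * (fderiv ℝ ω (t • x)) u (Fin.cons x fun j => t • w j)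
      + ω (t • x) (Fin.cons u fun j => t • w j) := by
  simp only [Fder, ContinuousLinearMap.add_apply, ContinuousLinearMap.comp_apply,
    ContinuousLinearMap.flipMultilinear_apply_apply, ContinuousLinearMap.sum_apply,
    ContinuousLinearMap.smul_apply, ContinuousLinearMap.id_apply, _root_.map_smul,
    ContinuousMultilinearMap.smul_apply, smul_eq_mul,
    ContinuousMultilinearMap.toContinuousLinearMap_apply]
  congr 1
  rw [Fin.sum_univ_succ]
  simp [Fin.update_cons_zero]
  exact Finset.sum_eq_zero fun i _ => (ω (t • x)).toMultilinearMap.map_update_zero _ _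

lemma aux_hasFDerivAt_integrand (hWopen : IsOpen W) (hsmooth : ContDiffOn ℝ (⊤ : ℕ∞) ω W)
    {t : ℝ} {x : Esp n} (hp : t • x ∈ W) (w : Fin m → Esp n) :
    HasFDerivAt (fun y => ω (t • y) (Fin.cons y fun j => t • w j)) (Fder ω w x t) x := by
  have hsm : HasFDerivAt (fun y : Esp n => t • y) (t • ContinuousLinearMap.id ℝ (Esp n)) x :=
    (hasFDerivAt_id x).const_smul t
  have ha : HasFDerivAt (fun y => ω (t • y))
      ((fderiv ℝ ω (t • x)).comp (t • ContinuousLinearMap.id ℝ (Esp n))) x :=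
    (aux_hasFDerivAt_omega hWopen hsmooth hp).comp x hsm
  set b : Fin (m+1) → Esp n → Esp n := Fin.cons (fun y => y) (fun j _ => t • w j) with hb_def
  set b' : Fin (m+1) → Esp n →L[ℝ] Esp n :=
    Fin.cons (ContinuousLinearMap.id ℝ (Esp n)) (fun _ => 0) with hb'_def
  have hb : ∀ i, HasFDerivAt (b i) (b' i) x := by
    intro i
    refine Fin.cases ?_ (fun j => ?_) i
    · exact hasFDerivAt_id x
    · simpa [hb_def, hb'_def] using hasFDerivAt_const (t • w j) x
  have H := ha.linear_multilinear_comp hb (ContinuousLinearMap.id ℝ (Om n m))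
  have hfun : ∀ y : Esp n, (fun i => b i y) = (Fin.cons y fun j => t • w j : Fin (m+1) → Esp n) :=
    fun y => funext fun i => Fin.cases rfl (fun j => rfl) i
  rw [show (fun y => ω (t • y) (Fin.cons y fun j => t • w j)) = fun y => (ContinuousLinearMap.id ℝ (Om n m)) (ω (t • y)) (fun i => b i y) from funext fun y => by rw [hfun]; rfl]
  refine H.congr_fderiv ?_
  simp only [Fder, ContinuousLinearMap.id_apply, hfun x, ← hb'_def]

lemma aux_clm_decomp (T : Esp n →L[ℝ] ℝ) :
    T = ∑ k : Fin n, T (EuclideanSpace.single k 1) • (EuclideanSpace.proj k : Esp n →L[ℝ] ℝ) := by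
  ext u
  have hu := (EuclideanSpace.basisFun (Fin n) ℝ).sum_repr u
  simp only [EuclideanSpace.basisFun_apply, EuclideanSpace.basisFun_repr] at hu
  conv_lhs => rw [← hu]
  rw [map_sum]
  simp only [_root_.map_smul, smul_eq_mul, ContinuousLinearMap.sum_apply,
    ContinuousLinearMap.smul_apply, PiLp.proj_apply]
  exact Finset.sum_congr rfl fun k _ => mul_comm _ _
end prelude1

lemma keyD (hWopen : IsOpen W) (hWconv : Convex ℝ W) (hW0 : (0:Esp n) ∈ W)
    (hsmooth : ContDiffOn ℝ (⊤ : ℕ∞) ω W) {L : ℝ} (hL : 0 ≤ L)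
    (hbound : ∀ q ∈ W, ∀ v : Fin (m + 1) → Esp n, |ω q v| ≤ L * ∏ i, ‖v i‖)
    {q : Esp n} (hq : q ∈ W) (w : Fin m → Esp n) :
    IntervalIntegrable (fun t => Fder ω w q t) volume 0 1 ∧
    HasFDerivAt (fun x => ∫ t in (0:ℝ)..1, ω (t • x) (Fin.cons x fun j => t • w j))
      (∫ t in (0:ℝ)..1, Fder ω w q t) q := by
  obtain ⟨δ, δpos, hδ⟩ := Metric.isOpen_iff.mp hWopen q hq
  set ε := δ / 2 with hε
  have εpos : 0 < ε := by positivity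
  have hball : closedBall q ε ⊆ W :=
    (Metric.closedBall_subset_ball (half_lt_self δpos)).trans hδ
  have hmem : ∀ t ∈ Icc (0:ℝ) 1, ∀ x ∈ closedBall q ε, t • x ∈ W := fun t ht x hx =>
    hWconv.smul_mem_of_zero_mem hW0 (hball hx) ht
  have hKcomp : IsCompact ((fun p : ℝ × Esp n => p.1 • p.2) '' (Icc (0:ℝ) 1 ×ˢ closedBall q ε)) :=
    (isCompact_Icc.prod (isCompact_closedBall q ε)).image (continuous_fst.smul continuous_snd)
  have hKW : ((fun p : ℝ × Esp n => p.1 • p.2) '' (Icc (0:ℝ) 1 ×ˢ closedBall q ε)) ⊆ W := by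
    rintro _ ⟨⟨t, x⟩, ⟨ht, hx⟩, rfl⟩
    exact hmem t ht x hx
  obtain ⟨C, hC⟩ := hKcomp.exists_bound_of_continuousOn (f := fun p => fderiv ℝ ω p)
    (by exact (aux_contOn_fderiv hWopen hsmooth).mono hKW)
  set C' := max C 0 with hC'def
  have hC'0 : (0:ℝ) ≤ C' := le_max_right _ _
  set P := ∏ j, ‖w j‖ with hPdef
  have hP0 : (0:ℝ) ≤ P := Finset.prod_nonneg fun j _ => norm_nonneg _
  have hqε : (0:ℝ) ≤ ‖q‖ + ε := by positivity
  set B := (C' * (‖q‖ + ε) + L) * P with hBdef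
  have hB0 : 0 ≤ B := by positivity
  have hDle : ∀ t ∈ Icc (0:ℝ) 1, ∀ x ∈ closedBall q ε, ‖fderiv ℝ ω (t • x)‖ ≤ C' := by
    intro t ht x hx
    exact le_trans (hC _ ⟨(t, x), ⟨ht, hx⟩, rfl⟩) (le_max_left _ _)
  have hxnorm : ∀ x ∈ closedBall q ε, ‖x‖ ≤ ‖q‖ + ε := by
    intro x hx
    have h1 : ‖x - q‖ ≤ ε := mem_closedBall_iff_norm.mp hx
    have h2 := norm_sub_norm_le x q
    linarith
  have hprodt : ∀ t ∈ Icc (0:ℝ) 1, (∏ j, ‖t • w j‖) ≤ P := by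
    intro t ht
    refine Finset.prod_le_prod (fun j _ => norm_nonneg _) (fun j _ => ?_)
    rw [norm_smul]
    have h1 : ‖t‖ ≤ 1 := by
      rw [Real.norm_eq_abs, abs_le]; exact ⟨by linarith [ht.1], ht.2⟩
    calc ‖t‖ * ‖w j‖ ≤ 1 * ‖w j‖ :=
          mul_le_mul_of_nonneg_right h1 (norm_nonneg _)
    _ = ‖w j‖ := one_mul _
  have hprodt0 : ∀ t : ℝ, (0:ℝ) ≤ ∏ j, ‖t • w j‖ :=
    fun t => Finset.prod_nonneg fun j _ => norm_nonneg _
  have hFle : ∀ t ∈ Icc (0:ℝ) 1, ∀ x ∈ closedBall q ε, ‖Fder ω w x t‖ ≤ B := by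
    intro t ht x hx
    refine ContinuousLinearMap.opNorm_le_bound _ hB0 fun u => ?_
    rw [Fder_apply, Real.norm_eq_abs]
    have ht1 : |t| ≤ 1 := abs_le.mpr ⟨by linarith [ht.1], ht.2⟩
    have e0 : ∏ i, ‖(Fin.cons x fun j => t • w j : Fin (m+1) → Esp n) i‖
        ≤ (‖q‖ + ε) * P := by
      rw [aux_prod_norm_cons]
      exact mul_le_mul (hxnorm x hx) (hprodt t ht) (hprodt0 t) hqε
    have e1 : |t * (fderiv ℝ ω (t • x)) u (Fin.cons x fun j => t • w j)|
        ≤ C' * ‖u‖ * ((‖q‖ + ε) * P) := by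
      rw [abs_mul]
      have h2 := ((fderiv ℝ ω (t • x)) u).le_opNorm
        (Fin.cons x fun j => t • w j : Fin (m+1) → Esp n)
      rw [Real.norm_eq_abs] at h2
      have h3 : ‖(fderiv ℝ ω (t • x)) u‖ ≤ C' * ‖u‖ :=
        le_trans ((fderiv ℝ ω (t • x)).le_opNorm u)
          (mul_le_mul_of_nonneg_right (hDle t ht x hx) (norm_nonneg u))
      have h4 : |(fderiv ℝ ω (t • x)) u (Fin.cons x fun j => t • w j)|
          ≤ (C' * ‖u‖) * ((‖q‖ + ε) * P) :=
        le_trans h2 (mul_le_mul h3 e0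
          (Finset.prod_nonneg fun i _ => norm_nonneg _) (by positivity))
      calc |t| * |(fderiv ℝ ω (t • x)) u (Fin.cons x fun j => t • w j)|
          ≤ 1 * ((C' * ‖u‖) * ((‖q‖ + ε) * P)) :=
            mul_le_mul ht1 h4 (abs_nonneg _) zero_le_one
      _ = C' * ‖u‖ * ((‖q‖ + ε) * P) := one_mul _
    have e2 : |ω (t • x) (Fin.cons u fun j => t • w j)| ≤ L * (‖u‖ * P) := by
      have h2 := (ω (t • x)).le_opNorm (Fin.cons u fun j => t • w j : Fin (m+1) → Esp n)
      rw [Real.norm_eq_abs, aux_prod_norm_cons] at h2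
      have h4 : ‖ω (t • x)‖ ≤ L := aux_norm_omega_le hL hbound (hmem t ht x hx)
      refine le_trans h2 (mul_le_mul h4 ?_ (by positivity) hL)
      exact mul_le_mul_of_nonneg_left (hprodt t ht) (norm_nonneg u)
    calc |t * (fderiv ℝ ω (t • x)) u (Fin.cons x fun j => t • w j)
          + ω (t • x) (Fin.cons u fun j => t • w j)|
        ≤ |t * (fderiv ℝ ω (t • x)) u (Fin.cons x fun j => t • w j)|
          + |ω (t • x) (Fin.cons u fun j => t • w j)| := abs_add_le _ _
    _ ≤ C' * ‖u‖ * ((‖q‖ + ε) * P) + L * (‖u‖ * P) := add_le_add e1 e2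
    _ = B * ‖u‖ := by rw [hBdef]; ring
  have hIoc : Set.uIoc (0:ℝ) 1 = Ioc 0 1 := uIoc_of_le zero_le_one
  -- measurability of F x
  have hmeasF : ∀ᶠ x in nhds q, AEStronglyMeasurable
      (fun t => ω (t • x) (Fin.cons x fun j => t • w j)) (volume.restrict (Set.uIoc (0:ℝ) 1)) := by
    filter_upwards [hWopen.mem_nhds hq] with x hx
    rw [hIoc]
    exact ((aux_cont_eval hWconv hW0 hsmooth hx (aux_cont_consarg x w)).mono
      Ioc_subset_Icc_self).aestronglyMeasurable measurableSet_Ioc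
  have hFint : IntervalIntegrable (fun t => ω (t • q) (Fin.cons q fun j => t • w j))
      volume 0 1 := by
    apply ContinuousOn.intervalIntegrable
    rw [uIcc_of_le zero_le_one]
    exact aux_cont_eval hWconv hW0 hsmooth hq (aux_cont_consarg q w)
  have hcontF' : ContinuousOn (fun t => Fder ω w q t) (Icc (0:ℝ) 1) := by
    have hrepr : (fun t => Fder ω w q t) = fun t => ∑ k : Fin n,
        (Fder ω w q t (EuclideanSpace.single k 1)) • (EuclideanSpace.proj k : Esp n →L[ℝ] ℝ) :=
      funext fun t => aux_clm_decomp _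
    rw [hrepr]
    refine continuousOn_finset_sum _ fun k _ => ContinuousOn.fun_smul ?_ continuousOn_const
    simp only [Fder_apply]
    exact ((continuous_id.continuousOn).mul
        (aux_cont_eval_deriv hWconv hW0 hWopen hsmooth hq (EuclideanSpace.single k 1)
          (aux_cont_consarg q w))).add
      (aux_cont_eval hWconv hW0 hsmooth hq (aux_cont_consarg (EuclideanSpace.single k 1) w))
  have hF'meas : AEStronglyMeasurable (fun t => Fder ω w q t)
      (volume.restrict (Set.uIoc (0:ℝ) 1)) := by
    rw [hIoc]
    exact (hcontF'.mono Ioc_subset_Icc_self).aestronglyMeasurable measurableSet_Ioc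
  have hlip : ∀ᵐ t ∂(volume : Measure ℝ), t ∈ Set.uIoc (0:ℝ) 1 →
      LipschitzOnWith (Real.nnabs B)
        (fun x => ω (t • x) (Fin.cons x fun j => t • w j)) (ball q ε) := by
    refine MeasureTheory.ae_of_all _ fun t ht => ?_
    rw [hIoc] at ht
    have ht' : t ∈ Icc (0:ℝ) 1 := Ioc_subset_Icc_self ht
    refine (convex_ball q ε).lipschitzOnWith_of_nnnorm_hasFDerivWithin_le
      (f' := fun x => Fder ω w x t)
      (fun x hx => (aux_hasFDerivAt_integrand hWopen hsmooth
        (hmem t ht' x (ball_subset_closedBall hx)) w).hasFDerivWithinAt)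
      (fun x hx => ?_)
    rw [← NNReal.coe_le_coe, coe_nnnorm, Real.coe_nnabs]
    exact le_trans (hFle t ht' x (ball_subset_closedBall hx)) (le_abs_self B)
  have hdiffae : ∀ᵐ t ∂(volume : Measure ℝ), t ∈ Set.uIoc (0:ℝ) 1 →
      HasFDerivAt (fun x => ω (t • x) (Fin.cons x fun j => t • w j)) (Fder ω w q t) q := by
    refine MeasureTheory.ae_of_all _ fun t ht => ?_
    rw [hIoc] at ht
    exact aux_hasFDerivAt_integrand hWopen hsmooth
      (hmem t (Ioc_subset_Icc_self ht) q (mem_closedBall_self εpos.le)) w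
  exact hasFDerivAt_integral_of_dominated_loc_of_lip_interval (ball_mem_nhds q εpos) hmeasF hFint
    hF'meas ((ae_restrict_iff' measurableSet_uIoc).mpr hlip) intervalIntegrable_const
    ((ae_restrict_iff' measurableSet_uIoc).mpr hdiffae)

lemma keyD_apply (hWopen : IsOpen W) (hWconv : Convex ℝ W) (hW0 : (0:Esp n) ∈ W)
    (hsmooth : ContDiffOn ℝ (⊤ : ℕ∞) ω W) {L : ℝ} (hL : 0 ≤ L)
    (hbound : ∀ q ∈ W, ∀ v : Fin (m + 1) → Esp n, |ω q v| ≤ L * ∏ i, ‖v i‖)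
    {q : Esp n} (hq : q ∈ W) (w : Fin m → Esp n) (u : Esp n) :
    fderivWithin ℝ (fun x => ∫ t in (0:ℝ)..1, ω (t • x) (Fin.cons x fun j => t • w j)) W q u
      = ∫ t in (0:ℝ)..1, (t * (fderiv ℝ ω (t • q)) u (Fin.cons q fun j => t • w j)
          + ω (t • q) (Fin.cons u fun j => t • w j)) := by
  obtain ⟨hint, hder⟩ := keyD hWopen hWconv hW0 hsmooth hL hbound hq w
  rw [fderivWithin_of_isOpen hWopen hq, hder.fderiv,
    ContinuousLinearMap.intervalIntegral_apply hint u]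
  simp only [Fder_apply]


lemma aux_map_cons_smul (f : Om n m) (x : Esp n) (t : ℝ) (w : Fin m → Esp n) :
    f (Fin.cons x fun j => t • w j) = t ^ m * f (Fin.cons x w) := by
  have h : (Fin.cons x fun j => t • w j : Fin (m+1) → Esp n)
      = fun i => ((Fin.cons (1:ℝ) (fun _ => t) : Fin (m+1) → ℝ) i) • ((Fin.cons x w : Fin (m+1) → Esp n) i) := by
    funext i
    refine Fin.cases ?_ (fun j => ?_) i <;> simp
  rw [h, f.map_smul_univ]
  simp [Fin.prod_cons, smul_eq_mul]

lemma aux_removeNth_succ_cons (q : Esp n) (v : Fin (m+1) → Esp n) (i : Fin (m+1)) :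
    (i.succ).removeNth (Fin.cons q v : Fin (m+2) → Esp n)
      = (Fin.cons q (i.removeNth v) : Fin (m+1) → Esp n) := by
  funext j
  refine Fin.cases ?_ (fun k => ?_) j
  · show (Fin.cons q v : Fin (m+2) → Esp n) (i.succ.succAbove 0) = q
    simp
  · show (Fin.cons q v : Fin (m+2) → Esp n) (i.succ.succAbove k.succ) = _
    rw [Fin.succ_succAbove_succ]
    simp [Fin.removeNth]

lemma aux_alt (f : Om n m)
    (hf : ∀ (v : Fin (m+1) → Esp n) (i j : Fin (m+1)), i ≠ j → v i = v j → f v = 0)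
    (v : Fin (m+1) → Esp n) (i : Fin (m+1)) :
    f (Fin.cons (v i) (i.removeNth v)) = (-1:ℝ)^(i:ℕ) * f v := by
  let A : AlternatingMap ℝ (Esp n) ℝ (Fin (m+1)) :=
    { toMultilinearMap := f.toMultilinearMap,
      map_eq_zero_of_eq' := fun v i j hveq hij => hf v i j hij hveq }
  have h1 : (Fin.cons (v i) (i.removeNth v) : Fin (m+1) → Esp n) = v ∘ i.cycleRange.symm := by
    funext j
    refine Fin.cases ?_ (fun k => ?_) j
    · simp [Fin.cycleRange_symm_zero]
    · simp [Fin.cycleRange_symm_succ, Fin.removeNth]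
  have h2 := A.map_perm v i.cycleRange.symm
  have h3 : Equiv.Perm.sign i.cycleRange.symm = (-1:ℤˣ)^(i:ℕ) := by
    rw [← Equiv.Perm.inv_def, map_inv, Fin.sign_cycleRange]
    simp
  have hA : ∀ u, A u = f u := fun u => rfl
  rw [hA, hA] at h2
  rw [h1, h2, h3, Units.smul_def]
  rw [zsmul_eq_mul]
  push_cast
  ring


lemma aux_closed (hWopen : IsOpen W)
    (hclosed : ∀ p ∈ W, ∀ u : Fin (m + 2) → Esp n,
      ∑ i : Fin (m + 2), (-1:ℝ)^(i:ℕ) *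
        fderivWithin ℝ ω W p (u i) (i.removeNth u) = 0)
    {p : Esp n} (hp : p ∈ W) (q : Esp n) (v : Fin (m+1) → Esp n) :
    ∑ i : Fin (m+1), (-1:ℝ)^(i:ℕ) *
        (fderiv ℝ ω p (v i)) (Fin.cons q (i.removeNth v))
      = (fderiv ℝ ω p q) v := by
  have h := hclosed p hp (Fin.cons q v)
  rw [Fin.sum_univ_succ] at h
  simp only [Fin.cons_zero, Fin.removeNth_zero, Fin.tail_cons, Fin.cons_succ,
    Fin.val_zero, pow_zero, one_mul, Fin.val_succ,
    fderivWithin_of_isOpen hWopen hp] at h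
  have h3 : ∑ i : Fin (m+1), (-1:ℝ)^((i:ℕ)+1) *
        (fderiv ℝ ω p (v i)) ((i.succ).removeNth (Fin.cons q v : Fin (m+2) → Esp n))
      = - ∑ i : Fin (m+1), (-1:ℝ)^(i:ℕ) *
        (fderiv ℝ ω p (v i)) (Fin.cons q (i.removeNth v)) := by
    rw [← Finset.sum_neg_distrib]
    refine Finset.sum_congr rfl fun i _ => ?_
    rw [aux_removeNth_succ_cons, pow_succ]
    ring
  rw [h3] at h
  linarith




/-- quantitative Poincaré lemma: on a convex open `W ⊆ ℝⁿ` containing `0`,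
a smooth closed `k`-form `ω` (here `k = m+1 ≥ 1`) with `|ω(q)(v₁,…,v_k)| ≤ L‖v₁‖⋯‖v_k‖`
admits the cone-operator primitive `μ(q)(v₁,…,v_{k-1}) = ∫₀¹ ω(tq)(q,tv₁,…,tv_{k-1}) dt`,
which satisfies `dμ = ω` on `W` and `|μ(q)(v)| ≤ (L‖q‖/k)·∏‖vᵢ‖`. -/
theorem cone_operator_primitive_bound
    (n m : ℕ)
    (W : Set (EuclideanSpace ℝ (Fin n))) (hWopen : IsOpen W) (hWconv : Convex ℝ W)
    (hW0 : (0 : EuclideanSpace ℝ (Fin n)) ∈ W)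
    (ω : EuclideanSpace ℝ (Fin n) →
      ContinuousMultilinearMap ℝ (fun _ : Fin (m + 1) => EuclideanSpace ℝ (Fin n)) ℝ)
    (hsmooth : ContDiffOn ℝ (⊤ : ℕ∞) ω W)
    -- each `ω q` is alternating
    (halt : ∀ q ∈ W, ∀ (v : Fin (m + 1) → EuclideanSpace ℝ (Fin n)) (i j : Fin (m + 1)),
      i ≠ j → v i = v j → ω q v = 0)
    -- `ω` is closed: `dω = 0` on `W`
    (hclosed : ∀ q ∈ W, ∀ v : Fin (m + 2) → EuclideanSpace ℝ (Fin n),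
      ∑ i : Fin (m + 2), (-1 : ℝ) ^ (i : ℕ) *
        fderivWithin ℝ ω W q (v i) (i.removeNth v) = 0)
    (L : ℝ) (hL : 0 ≤ L)
    (hbound : ∀ q ∈ W, ∀ v : Fin (m + 1) → EuclideanSpace ℝ (Fin n),
      |ω q v| ≤ L * ∏ i, ‖v i‖) :
    -- `dμ = ω` on `W`
    (∀ q ∈ W, ∀ v : Fin (m + 1) → EuclideanSpace ℝ (Fin n),
      ∑ i : Fin (m + 1), (-1 : ℝ) ^ (i : ℕ) *
        fderivWithin ℝ
          (fun x => ∫ t in (0 : ℝ)..1,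
            ω (t • x) (Fin.cons x fun j => t • (i.removeNth v) j))
          W q (v i) = ω q v) ∧
    -- the bound on `μ`
    (∀ q ∈ W, ∀ v : Fin m → EuclideanSpace ℝ (Fin n),
      |∫ t in (0 : ℝ)..1, ω (t • q) (Fin.cons q fun j => t • v j)| ≤
        (L * ‖q‖ / (m + 1)) * ∏ j, ‖v j‖) := by
  constructor
  · intro q hq v
    have hmemt : ∀ t ∈ Icc (0:ℝ) 1, t • q ∈ W := fun t ht =>
      hWconv.smul_mem_of_zero_mem hW0 hq ht
    have hgcont : ∀ i : Fin (m+1), ContinuousOn (fun t =>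
        t * (fderiv ℝ ω (t • q)) (v i) (Fin.cons q fun j => t • (i.removeNth v) j)
          + ω (t • q) (Fin.cons (v i) fun j => t • (i.removeNth v) j)) (Icc (0:ℝ) 1) := fun i =>
      ((continuous_id.continuousOn).mul
        (aux_cont_eval_deriv hWconv hW0 hWopen hsmooth hq (v i)
          (aux_cont_consarg q (i.removeNth v)))).add
        (aux_cont_eval hWconv hW0 hsmooth hq (aux_cont_consarg (v i) (i.removeNth v)))
    have hgint : ∀ i : Fin (m+1), IntervalIntegrable (fun t => (-1:ℝ)^(i:ℕ) *
        (t * (fderiv ℝ ω (t • q)) (v i) (Fin.cons q fun j => t • (i.removeNth v) j)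
          + ω (t • q) (Fin.cons (v i) fun j => t • (i.removeNth v) j))) volume 0 1 := by
      intro i
      apply IntervalIntegrable.const_mul
      apply ContinuousOn.intervalIntegrable
      rw [uIcc_of_le (zero_le_one : (0:ℝ) ≤ 1)]
      exact hgcont i
    have hψcont : ContinuousOn (fun t : ℝ => (((m:ℝ)+1) * t^m) * (ω (t • q) v)
        + t^(m+1) * ((fderiv ℝ ω (t • q)) q v)) (Icc (0:ℝ) 1) := by
      refine ContinuousOn.add
        (ContinuousOn.mul ((continuous_const.mul (continuous_pow m)).continuousOn) ?_)
        (ContinuousOn.mul ((continuous_pow (m+1)).continuousOn) ?_)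
      · exact aux_cont_eval hWconv hW0 hsmooth hq continuous_const
      · exact aux_cont_eval_deriv hWconv hW0 hWopen hsmooth hq q continuous_const
    have hψint : IntervalIntegrable (fun t : ℝ => (((m:ℝ)+1) * t^m) * (ω (t • q) v)
        + t^(m+1) * ((fderiv ℝ ω (t • q)) q v)) volume 0 1 := by
      apply ContinuousOn.intervalIntegrable
      rw [uIcc_of_le (zero_le_one : (0:ℝ) ≤ 1)]
      exact hψcont
    have hEq : Set.EqOn (fun t => ∑ i : Fin (m+1), (-1:ℝ)^(i:ℕ) *
        (t * (fderiv ℝ ω (t • q)) (v i) (Fin.cons q fun j => t • (i.removeNth v) j)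
          + ω (t • q) (Fin.cons (v i) fun j => t • (i.removeNth v) j)))
        (fun t : ℝ => (((m:ℝ)+1) * t^m) * (ω (t • q) v)
          + t^(m+1) * ((fderiv ℝ ω (t • q)) q v)) (Icc (0:ℝ) 1) := by
      intro t ht
      have hp : t • q ∈ W := hmemt t ht
      have hterm : ∀ i : Fin (m+1), (-1:ℝ)^(i:ℕ) *
          (t * (fderiv ℝ ω (t • q)) (v i) (Fin.cons q fun j => t • (i.removeNth v) j)
            + ω (t • q) (Fin.cons (v i) fun j => t • (i.removeNth v) j))
          = t^(m+1) * ((-1:ℝ)^(i:ℕ) *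
              (fderiv ℝ ω (t • q) (v i)) (Fin.cons q (i.removeNth v)))
            + t^m * (ω (t • q) v) := by
        intro i
        have hsq : (-1:ℝ)^(i:ℕ) * (-1:ℝ)^(i:ℕ) = 1 := by
          rw [← pow_add]
          exact Even.neg_one_pow ⟨(i:ℕ), rfl⟩
        rw [aux_map_cons_smul (fderiv ℝ ω (t • q) (v i)) q t (i.removeNth v),
          aux_map_cons_smul (ω (t • q)) (v i) t (i.removeNth v),
          aux_alt (ω (t • q)) (fun v' i' j' hij hveq => halt (t • q) hp v' i' j' hij hveq) v i]
        linear_combination (t^m * (ω (t • q) v)) * hsq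
      show ∑ i : Fin (m+1), _ = _
      calc ∑ i : Fin (m+1), (-1:ℝ)^(i:ℕ) *
            (t * (fderiv ℝ ω (t • q)) (v i) (Fin.cons q fun j => t • (i.removeNth v) j)
              + ω (t • q) (Fin.cons (v i) fun j => t • (i.removeNth v) j))
          = ∑ i : Fin (m+1), (t^(m+1) * ((-1:ℝ)^(i:ℕ) *
              (fderiv ℝ ω (t • q) (v i)) (Fin.cons q (i.removeNth v)))
            + t^m * (ω (t • q) v)) := Finset.sum_congr rfl fun i _ => hterm i
        _ = t^(m+1) * (∑ i : Fin (m+1), (-1:ℝ)^(i:ℕ) *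
              (fderiv ℝ ω (t • q) (v i)) (Fin.cons q (i.removeNth v)))
            + (m+1) * (t^m * (ω (t • q) v)) := by
            rw [Finset.sum_add_distrib, ← Finset.mul_sum, Finset.sum_const,
              Finset.card_univ, Fintype.card_fin, nsmul_eq_mul]
            push_cast
            ring
        _ = (((m:ℝ)+1) * t^m) * (ω (t • q) v) + t^(m+1) * ((fderiv ℝ ω (t • q)) q v) := by
            rw [aux_closed hWopen hclosed hp q v]
            push_cast
            ring
    have hFTC : (∫ t in (0:ℝ)..1, ((((m:ℝ)+1) * t^m) * (ω (t • q) v)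
        + t^(m+1) * ((fderiv ℝ ω (t • q)) q v))) = ω q v := by
      have hderiv : ∀ t ∈ uIcc (0:ℝ) 1, HasDerivAt (fun s : ℝ => s^(m+1) * (ω (s • q) v))
          ((((m:ℝ)+1) * t^m) * (ω (t • q) v) + t^(m+1) * ((fderiv ℝ ω (t • q)) q v)) t := by
        intro t ht
        rw [uIcc_of_le (zero_le_one : (0:ℝ) ≤ 1)] at ht
        have hp : t • q ∈ W := hmemt t ht
        have hc : HasDerivAt (fun s : ℝ => s • q) q t := by
          simpa using (hasDerivAt_id t).smul_const q
        have h1 : HasDerivAt (fun s : ℝ => ω (s • q)) (fderiv ℝ ω (t • q) q) t :=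
          (aux_hasFDerivAt_omega hWopen hsmooth hp).comp_hasDerivAt t hc
        have h2 : HasDerivAt (fun s : ℝ => ω (s • q) v) ((fderiv ℝ ω (t • q) q) v) t := by
          exact (ContinuousMultilinearMap.apply ℝ
            (fun _ : Fin (m+1) => Esp n) ℝ v).hasFDerivAt.comp_hasDerivAt t h1
        have h3 := (hasDerivAt_pow (m+1) t).mul h2
        simp only [Nat.add_sub_cancel] at h3
        refine h3.congr_deriv ?_
        push_cast
        ring
      rw [intervalIntegral.integral_eq_sub_of_hasDerivAt hderiv hψint]
      simp
    calc ∑ i : Fin (m+1), (-1 : ℝ) ^ (i : ℕ) *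
        fderivWithin ℝ
          (fun x => ∫ t in (0 : ℝ)..1,
            ω (t • x) (Fin.cons x fun j => t • (i.removeNth v) j))
          W q (v i)
        = ∑ i : Fin (m+1), (-1:ℝ)^(i:ℕ) * ∫ t in (0:ℝ)..1,
            (t * (fderiv ℝ ω (t • q)) (v i) (Fin.cons q fun j => t • (i.removeNth v) j)
              + ω (t • q) (Fin.cons (v i) fun j => t • (i.removeNth v) j)) := by
          refine Finset.sum_congr rfl fun i _ => ?_
          rw [keyD_apply hWopen hWconv hW0 hsmooth hL hbound hq (i.removeNth v) (v i)]
      _ = ∑ i : Fin (m+1), ∫ t in (0:ℝ)..1, (-1:ℝ)^(i:ℕ) *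
            (t * (fderiv ℝ ω (t • q)) (v i) (Fin.cons q fun j => t • (i.removeNth v) j)
              + ω (t • q) (Fin.cons (v i) fun j => t • (i.removeNth v) j)) := by
          refine Finset.sum_congr rfl fun i _ => ?_
          rw [intervalIntegral.integral_const_mul]
      _ = ∫ t in (0:ℝ)..1, ∑ i : Fin (m+1), (-1:ℝ)^(i:ℕ) *
            (t * (fderiv ℝ ω (t • q)) (v i) (Fin.cons q fun j => t • (i.removeNth v) j)
              + ω (t • q) (Fin.cons (v i) fun j => t • (i.removeNth v) j)) :=
          (intervalIntegral.integral_finset_sum fun i _ => hgint i).symm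
      _ = ∫ t in (0:ℝ)..1, ((((m:ℝ)+1) * t^m) * (ω (t • q) v)
            + t^(m+1) * ((fderiv ℝ ω (t • q)) q v)) := by
          apply intervalIntegral.integral_congr
          rw [uIcc_of_le (zero_le_one : (0:ℝ) ≤ 1)]
          exact hEq
      _ = ω q v := hFTC
  · intro q hq v
    have hmemt : ∀ t ∈ Icc (0:ℝ) 1, t • q ∈ W := fun t ht =>
      hWconv.smul_mem_of_zero_mem hW0 hq ht
    have hcont : ContinuousOn (fun t => ω (t • q) (Fin.cons q fun j => t • v j))
        (Icc (0:ℝ) 1) := aux_cont_eval hWconv hW0 hsmooth hq (aux_cont_consarg q v)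
    have hint : IntervalIntegrable (fun t => ω (t • q) (Fin.cons q fun j => t • v j))
        volume 0 1 := by
      apply ContinuousOn.intervalIntegrable
      rw [uIcc_of_le (zero_le_one : (0:ℝ) ≤ 1)]
      exact hcont
    have hbint : IntervalIntegrable (fun t : ℝ => (L * ‖q‖ * ∏ j, ‖v j‖) * t^m)
        volume 0 1 := (continuous_const.mul (continuous_pow m)).intervalIntegrable _ _
    have habs : ∀ t ∈ Icc (0:ℝ) 1,
        |ω (t • q) (Fin.cons q fun j => t • v j)| ≤ (L * ‖q‖ * ∏ j, ‖v j‖) * t^m := by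
      intro t ht
      have h1 := hbound (t • q) (hmemt t ht) (Fin.cons q fun j => t • v j)
      rw [aux_prod_norm_cons] at h1
      have h2 : (∏ j, ‖t • v j‖) = |t|^m * ∏ j, ‖v j‖ := by
        simp [norm_smul, Finset.prod_mul_distrib, Real.norm_eq_abs]
      rw [h2, abs_of_nonneg ht.1] at h1
      calc |ω (t • q) (Fin.cons q fun j => t • v j)|
          ≤ L * (‖q‖ * (t^m * ∏ j, ‖v j‖)) := h1
        _ = (L * ‖q‖ * ∏ j, ‖v j‖) * t^m := by ring
    calc |∫ t in (0:ℝ)..1, ω (t • q) (Fin.cons q fun j => t • v j)|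
        ≤ ∫ t in (0:ℝ)..1, |ω (t • q) (Fin.cons q fun j => t • v j)| :=
          intervalIntegral.abs_integral_le_integral_abs zero_le_one
      _ ≤ ∫ t in (0:ℝ)..1, (L * ‖q‖ * ∏ j, ‖v j‖) * t^m := by
          apply intervalIntegral.integral_mono_on zero_le_one hint.abs hbint
          intro t ht
          exact habs t ht
      _ = (L * ‖q‖ / (m + 1)) * ∏ j, ‖v j‖ := by
          rw [intervalIntegral.integral_const_mul, integral_pow]
          push_cast
          ring
end

section
/- Let X be a connected CW-complex with finite 1-skeleton and infinite fundamental group, with universal cover X̃ and deck group G = π₁(X). Fix a vertex x₀ ∈ X̃ and let u(v) be the combinatorial distance (minimal number of 1-cells in an edge path) from x₀ to a vertex v. Then u is unbounded on the vertex set of X̃, the cellular 1-cochain α = δu assigns value in {−1, 0, 1} to every 1-cell (hence is uniformly bounded), and any cellular 0-cochain u' with δu' = α on a connected complex differs from u by a constant, hence is unbounded. Consequently H¹_{(∞)}(X;ℝ) ≠ 0. -/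
private theorem ball_finite_aux (V : Type*) (Γ : SimpleGraph V) (hconn : Γ.Connected)
    (hlf : ∀ v : V, (Γ.neighborSet v).Finite) (x₀ : V) (n : ℕ) :
    {v : V | Γ.dist x₀ v ≤ n}.Finite := by
  induction n with
  | zero =>
    have : {v : V | Γ.dist x₀ v ≤ 0} ⊆ {x₀} := by
      intro v hv
      simp only [Set.mem_setOf_eq, Nat.le_zero] at hv
      simp [((hconn.dist_eq_zero_iff).mp hv).symm]
    exact (Set.finite_singleton x₀).subset this
  | succ n ih =>
    have hsub : {v : V | Γ.dist x₀ v ≤ n + 1} ⊆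
        {v : V | Γ.dist x₀ v ≤ n} ∪ ⋃ w ∈ {v : V | Γ.dist x₀ v ≤ n}, Γ.neighborSet w := by
      intro v hv
      simp only [Set.mem_setOf_eq] at hv
      rcases Nat.lt_or_ge (Γ.dist x₀ v) (n+1) with h | h
      · exact Or.inl (Nat.lt_succ_iff.mp h)
      · have hd : Γ.dist x₀ v = n + 1 := le_antisymm hv h
        obtain ⟨p, hp⟩ := (hconn x₀ v).exists_walk_length_eq_dist
        have hne : ¬ p.reverse.Nil := by
          rw [SimpleGraph.Walk.nil_iff_length_eq, SimpleGraph.Walk.length_reverse]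
          omega
        obtain ⟨w, hadj, q, hq⟩ := SimpleGraph.Walk.not_nil_iff.mp hne
        have hwle : Γ.dist x₀ w ≤ n := by
          have h1 : Γ.dist w x₀ ≤ q.length := SimpleGraph.dist_le q
          have h2 : q.length = n := by
            have := congrArg SimpleGraph.Walk.length hq
            rw [SimpleGraph.Walk.length_reverse] at this
            simp at this
            omega
          rw [SimpleGraph.dist_comm] at h1
          omega
        exact Or.inr (Set.mem_biUnion hwle hadj.symm)
    exact (ih.union (Set.Finite.biUnion ih fun w _ => hlf w)).subset hsub

/-- let `Γ` (on vertex set `V`) be the 1-skeleton of the universal cover of a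
connected CW-complex with finite 1-skeleton and infinite fundamental group: a connected
locally finite graph with infinitely many vertices on which the deck group `G` acts by graph
automorphisms with finitely many orbits of vertices. Then the combinatorial distance
`u = dist(x₀, ·)` is unbounded, the 1-cochain `α = δu` takes values in `{-1,0,1}` on edges
(hence is bounded on orbits), and every primitive of `α` differs from `u` by a constant and
is therefore unbounded; consequently `H¹_{(∞)}(X;ℝ) ≠ 0`. -/
theorem linf_H1_nonzero_of_infinite_pi1
    (V G : Type*) [Group G] [MulAction G V] (Γ : SimpleGraph V)
    (hact : ∀ (g : G) (v w : V), Γ.Adj v w → Γ.Adj (g • v) (g • w))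
    [Finite (MulAction.orbitRel.Quotient G V)] [Infinite V]
    (hconn : Γ.Connected) (hlf : ∀ v : V, (Γ.neighborSet v).Finite)
    (x₀ : V) :
    -- `u` is unbounded on the vertices of the universal cover
    (∀ C : ℝ, ∃ v : V, C < (Γ.dist x₀ v : ℝ)) ∧
    -- `α = δu` assigns a value in `{-1, 0, 1}` to every edge, hence is uniformly bounded
    (∀ v w : V, Γ.Adj v w →
      ((Γ.dist x₀ w : ℝ) - (Γ.dist x₀ v : ℝ) = -1 ∨
       (Γ.dist x₀ w : ℝ) - (Γ.dist x₀ v : ℝ) = 0 ∨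
       (Γ.dist x₀ w : ℝ) - (Γ.dist x₀ v : ℝ) = 1)) ∧
    -- every 0-cochain `u'` with `δu' = α` differs from `u` by a constant, hence is unbounded;
    -- in particular `α` has no primitive bounded on orbits, so `H¹_{(∞)}(X;ℝ) ≠ 0`
    (∀ u' : V → ℝ,
      (∀ v w : V, Γ.Adj v w →
        u' w - u' v = (Γ.dist x₀ w : ℝ) - (Γ.dist x₀ v : ℝ)) →
      (∃ c : ℝ, ∀ v : V, u' v = (Γ.dist x₀ v : ℝ) + c) ∧
      ∀ C : ℝ, ∃ v : V, C < |u' v|) := by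
  have hunb : ∀ C : ℝ, ∃ v : V, C < (Γ.dist x₀ v : ℝ) := by
    intro C
    obtain ⟨n, hn⟩ := exists_nat_gt C
    have hfin := ball_finite_aux V Γ hconn hlf x₀ n
    obtain ⟨v, hv⟩ := (hfin.infinite_compl).nonempty
    simp only [Set.mem_compl_iff, Set.mem_setOf_eq, not_le] at hv
    exact ⟨v, lt_trans hn (by exact_mod_cast hv)⟩
  have hedge : ∀ v w : V, Γ.Adj v w →
      ((Γ.dist x₀ w : ℝ) - (Γ.dist x₀ v : ℝ) = -1 ∨
       (Γ.dist x₀ w : ℝ) - (Γ.dist x₀ v : ℝ) = 0 ∨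
       (Γ.dist x₀ w : ℝ) - (Γ.dist x₀ v : ℝ) = 1) := by
    intro v w hvw
    have h1 : Γ.dist x₀ w ≤ Γ.dist x₀ v + 1 := by
      have := hconn.dist_triangle (u := x₀) (v := v) (w := w)
      have hvw1 : Γ.dist v w = 1 := SimpleGraph.dist_eq_one_iff_adj.mpr hvw
      omega
    have h2 : Γ.dist x₀ v ≤ Γ.dist x₀ w + 1 := by
      have := hconn.dist_triangle (u := x₀) (v := w) (w := v)
      have hvw1 : Γ.dist w v = 1 := SimpleGraph.dist_eq_one_iff_adj.mpr hvw.symm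
      omega
    have : (Γ.dist x₀ w : ℤ) - Γ.dist x₀ v = -1 ∨ (Γ.dist x₀ w : ℤ) - Γ.dist x₀ v = 0 ∨
        (Γ.dist x₀ w : ℤ) - Γ.dist x₀ v = 1 := by omega
    rcases this with h | h | h
    · left; exact_mod_cast h
    · right; left; exact_mod_cast h
    · right; right; exact_mod_cast h
  refine ⟨hunb, hedge, fun u' hu' => ?_⟩
  have hconst : ∀ v : V, u' v - (Γ.dist x₀ v : ℝ) = u' x₀ := by
    intro v
    obtain ⟨p⟩ := hconn x₀ v
    have key : ∀ {a b : V} (q : Γ.Walk a b),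
        u' a - (Γ.dist x₀ a : ℝ) = u' b - (Γ.dist x₀ b : ℝ) := by
      intro a b q
      induction q with
      | nil => rfl
      | cons h q ih =>
        have := hu' _ _ h
        linarith
    have := (key p).symm
    rw [this, SimpleGraph.dist_self]; simp
  refine ⟨⟨u' x₀, fun v => by linarith [hconst v]⟩, fun C => ?_⟩
  obtain ⟨v, hv⟩ := hunb (C + |u' x₀|)
  refine ⟨v, ?_⟩
  have h1 : u' v = (Γ.dist x₀ v : ℝ) + u' x₀ := by linarith [hconst v]
  have h2 : (Γ.dist x₀ v : ℝ) + u' x₀ ≤ |u' v| := by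
    rw [h1]
    calc (Γ.dist x₀ v : ℝ) + u' x₀ ≤ |(Γ.dist x₀ v : ℝ) + u' x₀| := le_abs_self _
    _ = _ := rfl
  have h3 : -|u' x₀| ≤ u' x₀ := neg_abs_le _
  linarith
end

section
/- Let G be a group, V and W normed vector spaces each with an isometric linear G-action, and φ : V → W a norm-preserving linear isomorphism (not assumed G-equivariant). Then the map sending f ∈ ℓ∞(G,V) to f' ∈ ℓ∞(G,W) defined by f'(h) = h·φ(h⁻¹·f(h)) is a well-defined isomorphism of ℝ[G]-modules ℓ∞(G,V) ≅ ℓ∞(G,W), where both carry the action (g·f)(h) = g·f(g⁻¹h). -/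
variable {G V W : Type*}

/-- The twisting map `ℓ∞(G,V) → ℓ∞(G,W)` associated to a norm-preserving linear isomorphism
`φ : V → W` (not assumed equivariant): `f'(h) = h · φ(h⁻¹ · f(h))`. -/
noncomputable def twist [Group G]
    [NormedAddCommGroup V] [NormedSpace ℝ V] [NormedAddCommGroup W] [NormedSpace ℝ W]
    (ρV : G →* (V ≃ₗᵢ[ℝ] V)) (ρW : G →* (W ≃ₗᵢ[ℝ] W)) (φ : V ≃ₗᵢ[ℝ] W)
    (f : G → V) : G → W :=
  fun h => ρW h (φ (ρV h⁻¹ (f h)))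

/-- the twisting map `f ↦ (h ↦ h·φ(h⁻¹·f(h)))` is a well-defined isomorphism
of `ℝ[G]`-modules `ℓ∞(G,V) ≅ ℓ∞(G,W)`, with inverse given by the analogous formula for
`φ⁻¹`: it preserves boundedness, is linear, is `G`-equivariant for the actions
`(g·f)(h) = g·f(g⁻¹h)`, and is bijective. -/
theorem twist_is_linf_module_iso
    [Group G] [NormedAddCommGroup V] [NormedSpace ℝ V]
    [NormedAddCommGroup W] [NormedSpace ℝ W]
    (ρV : G →* (V ≃ₗᵢ[ℝ] V)) (ρW : G →* (W ≃ₗᵢ[ℝ] W)) (φ : V ≃ₗᵢ[ℝ] W) :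
    -- well-definedness: bounded functions are sent to bounded functions
    (∀ f : G → V, (∃ C : ℝ, ∀ h : G, ‖f h‖ ≤ C) →
      ∃ C : ℝ, ∀ h : G, ‖twist ρV ρW φ f h‖ ≤ C) ∧
    -- linearity
    IsLinearMap ℝ (twist ρV ρW φ) ∧
    -- `G`-equivariance
    (∀ (g : G) (f : G → V),
      twist ρV ρW φ (fun h => ρV g (f (g⁻¹ * h))) =
        fun h => ρW g (twist ρV ρW φ f (g⁻¹ * h))) ∧
    -- the analogous map for `φ⁻¹` is a two-sided inverse
    (∀ f : G → V, twist ρW ρV φ.symm (twist ρV ρW φ f) = f) ∧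
    (∀ f : G → W, twist ρV ρW φ (twist ρW ρV φ.symm f) = f) := by
  have keyW : ∀ (a b : G) (x : W), ρW a (ρW b x) = ρW (a*b) x :=
    fun a b x => by rw [map_mul]; rfl
  have keyV : ∀ (a b : G) (x : V), ρV a (ρV b x) = ρV (a*b) x :=
    fun a b x => by rw [map_mul]; rfl
  refine ⟨?_, ?_, ?_, ?_, ?_⟩
  · rintro f ⟨C, hC⟩
    exact ⟨C, fun h => by
      simpa [twist, LinearIsometryEquiv.norm_map] using hC h⟩
  · constructor <;> intros <;> funext h <;> simp [twist]
  · intro g f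
    funext h
    simp only [twist, keyV, keyW]
    rw [show h⁻¹ * g = (g⁻¹ * h)⁻¹ by group, show g * (g⁻¹ * h) = h by group]
  · intro f
    funext h
    have oneW : ∀ x : W, (1 : W ≃ₗᵢ[ℝ] W) x = x := fun _ => rfl
    have oneV : ∀ x : V, (1 : V ≃ₗᵢ[ℝ] V) x = x := fun _ => rfl
    simp only [twist, keyW, keyV, inv_mul_cancel, mul_inv_cancel, map_one, oneW, oneV,
      LinearIsometryEquiv.symm_apply_apply]
  · intro f
    funext h
    have oneW : ∀ x : W, (1 : W ≃ₗᵢ[ℝ] W) x = x := fun _ => rfl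
    have oneV : ∀ x : V, (1 : V ≃ₗᵢ[ℝ] V) x = x := fun _ => rfl
    simp only [twist, keyW, keyV, inv_mul_cancel, mul_inv_cancel, map_one, oneW, oneV,
      LinearIsometryEquiv.apply_symm_apply]
end
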